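/- arXiv:1102.4712 — 3 statements merged into one kernel-verified Lean document; each statement's English description precedes it below -/
import Mathlib

section
/- (Lovász Local Lemma, symmetric case) Let A₁,…,Aₙ be events in a probability space such that each Aᵢ is mutually independent of all but at most d of the other events, and P(Aᵢ) ≤ p for all i. If e·p·(d+1) ≤ 1, then P(⋂ᵢ Āᵢ) > 0. -/
/-!
Choose `x ∈ [0, 1)` with `P(Aᵢ) ≤ x (1 - x)^d`: `x = 1/(d+1)` works because
`(1 - 1/(d+1))^d ≥ 1/e`, and for `d = 0` one takes `x = max p 0`. By strong induction on `|S|`,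
`P(Aᵢ ∩ ⋂_{j ∈ S} Aⱼᶜ) ≤ x · P(⋂_{j ∈ S} Aⱼᶜ)` for `i ∉ S`. Split `S` into the neighbours
`S₁ ⊆ Γ i` and the rest `S₂`: by independence the left side is at most
`P(Aᵢ) · P(⋂_{S₂} Aⱼᶜ)`, while adding the events of `S₁` one at a time and applying the
induction hypothesis at each step shows `P(⋂_S Aⱼᶜ) ≥ (1 - x)^{|S₁|} P(⋂_{S₂} Aⱼᶜ)`.
The same chain argument with `S₂ = ∅` gives `P(⋂ᵢ Aᵢᶜ) ≥ (1 - x)^n > 0`.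
Conditional probabilities are kept multiplied out, so no conditioning event needs positive
probability.
-/

open MeasureTheory

section Avoidance

open Finset

variable {Ω ι : Type*} [MeasurableSpace Ω] {μ : Measure Ω} [IsFiniteMeasure μ]

theorem one_sub_mul_le_measureReal_compl_inter {B T : Set Ω} (hB : MeasurableSet B) {x : ℝ}
    (h : μ.real (B ∩ T) ≤ x * μ.real T) : (1 - x) * μ.real T ≤ μ.real (Bᶜ ∩ T) := by
  have hsplit := measureReal_inter_add_sdiff (μ := μ) (s := T) hB
  rw [Set.inter_comm T B, Set.sdiff_eq, Set.inter_comm T Bᶜ] at hsplit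
  linarith

variable [DecidableEq ι] {A : ι → Set Ω} {x : ℝ}

theorem one_sub_pow_card_mul_le_measureReal_biInter_compl (hA : ∀ i, MeasurableSet (A i))
    (hx : x ≤ 1) (T : Finset ι) {U : Finset ι}
    (hU : ∀ a ∈ U, ∀ V ⊆ U, a ∉ V →
      μ.real (A a ∩ ⋂ j ∈ V ∪ T, (A j)ᶜ) ≤ x * μ.real (⋂ j ∈ V ∪ T, (A j)ᶜ)) :
    (1 - x) ^ #U * μ.real (⋂ j ∈ T, (A j)ᶜ) ≤ μ.real (⋂ j ∈ U ∪ T, (A j)ᶜ) := by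
  induction U using Finset.induction_on with
  | empty => simp
  | insert a U haU ih =>
    have ih' := ih fun b hb V hV => hU b (mem_insert_of_mem hb) V (hV.trans (subset_insert a U))
    have hstep := one_sub_mul_le_measureReal_compl_inter (hA a)
      (hU a (mem_insert_self a U) U (subset_insert a U) haU)
    rw [insert_union, set_biInter_insert, card_insert_of_notMem haU, pow_succ', mul_assoc]
    exact (mul_le_mul_of_nonneg_left ih' (by linarith)).trans hstep

theorem measureReal_inter_biInter_compl_le (hA : ∀ i, MeasurableSet (A i)) {d : ℕ}
    (hx₀ : 0 ≤ x) (hx₁ : x ≤ 1) {Γ : ι → Finset ι} (hΓ : ∀ i, #(Γ i) ≤ d)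
    (hindep : ∀ i, ∀ T : Finset ι, (∀ j ∈ T, j ≠ i ∧ j ∉ Γ i) →
      μ.real (A i ∩ ⋂ j ∈ T, (A j)ᶜ) = μ.real (A i) * μ.real (⋂ j ∈ T, (A j)ᶜ))
    (hp : ∀ i, μ.real (A i) ≤ x * (1 - x) ^ d) (S : Finset ι) {i : ι} (hi : i ∉ S) :
    μ.real (A i ∩ ⋂ j ∈ S, (A j)ᶜ) ≤ x * μ.real (⋂ j ∈ S, (A j)ᶜ) := by
  induction S using Finset.strongInduction generalizing i with
  | H S ih =>
  set S₁ := S.filter (· ∈ Γ i)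
  set S₂ := S.filter (· ∉ Γ i)
  have hS₂ : S₂ ⊆ S := filter_subset _ S
  have hnum : μ.real (A i ∩ ⋂ j ∈ S, (A j)ᶜ) ≤ x * (1 - x) ^ d * μ.real (⋂ j ∈ S₂, (A j)ᶜ) :=
    calc μ.real (A i ∩ ⋂ j ∈ S, (A j)ᶜ) ≤ μ.real (A i ∩ ⋂ j ∈ S₂, (A j)ᶜ) :=
          measureReal_mono (Set.inter_subset_inter_right _ (Set.biInter_subset_biInter_left hS₂))
      _ = μ.real (A i) * μ.real (⋂ j ∈ S₂, (A j)ᶜ) :=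
          hindep i S₂ fun j hj => ⟨ne_of_mem_of_not_mem (hS₂ hj) hi, (mem_filter.1 hj).2⟩
      _ ≤ x * (1 - x) ^ d * μ.real (⋂ j ∈ S₂, (A j)ᶜ) := by gcongr; exact hp i
  have hden : (1 - x) ^ #S₁ * μ.real (⋂ j ∈ S₂, (A j)ᶜ) ≤ μ.real (⋂ j ∈ S, (A j)ᶜ) := by
    rw [← filter_union_filter_not_eq (· ∈ Γ i) S]
    refine one_sub_pow_card_mul_le_measureReal_biInter_compl hA hx₁ S₂ fun a ha V hV haV => ?_
    have ha₁ := mem_filter.1 ha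
    have haVS₂ : a ∉ V ∪ S₂ := by
      simp only [mem_union, mem_filter, not_or, not_and, not_not, S₂]
      exact ⟨haV, fun _ => ha₁.2⟩
    have hVS₂ : V ∪ S₂ ⊂ S :=
      (ssubset_iff_of_subset (union_subset (hV.trans (filter_subset _ S)) hS₂)).2 ⟨a, ha₁.1, haVS₂⟩
    exact ih _ hVS₂ haVS₂
  have hS₁ : #S₁ ≤ d := (card_le_card fun j hj => (mem_filter.1 hj).2).trans (hΓ i)
  have hpow : (1 - x) ^ d ≤ (1 - x) ^ #S₁ := pow_le_pow_of_le_one (by linarith) (by linarith) hS₁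
  calc μ.real (A i ∩ ⋂ j ∈ S, (A j)ᶜ)
      ≤ x * (1 - x) ^ #S₁ * μ.real (⋂ j ∈ S₂, (A j)ᶜ) := hnum.trans (by gcongr)
    _ ≤ x * μ.real (⋂ j ∈ S, (A j)ᶜ) := by
      rw [mul_assoc]
      exact mul_le_mul_of_nonneg_left hden hx₀

end Avoidance

theorem exp_neg_one_le_one_sub_inv_pow (d : ℕ) : Real.exp (-1) ≤ (1 - ((d : ℝ) + 1)⁻¹) ^ d := by
  rcases Nat.eq_zero_or_pos d with rfl | hd
  · simp
  have hd' : (d : ℝ) ≠ 0 := by positivity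
  have : 1 - ((d : ℝ) + 1)⁻¹ = (1 + (d : ℝ)⁻¹)⁻¹ := by field_simp; ring
  rw [this, inv_pow, Real.exp_neg]
  exact inv_anti₀ (by positivity) Real.one_add_inv_pow_le_exp

theorem exists_le_mul_one_sub_pow {p : ℝ} {d : ℕ} (h : Real.exp 1 * p * (d + 1) ≤ 1) :
    ∃ x : ℝ, 0 ≤ x ∧ x < 1 ∧ p ≤ x * (1 - x) ^ d := by
  rcases Nat.eq_zero_or_pos d with rfl | hd
  · refine ⟨max p 0, le_max_right _ _, max_lt ?_ one_pos, by simp⟩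
    have he : 1 < Real.exp 1 := Real.one_lt_exp_iff.2 one_pos
    rw [Nat.cast_zero, zero_add, mul_one] at h
    nlinarith
  have hx₀ : (0 : ℝ) < ((d : ℝ) + 1)⁻¹ := by positivity
  refine ⟨_, hx₀.le, inv_lt_one_of_one_lt₀ (by simpa using hd), ?_⟩
  calc p ≤ ((d : ℝ) + 1)⁻¹ * Real.exp (-1) := by
        rw [Real.exp_neg]
        field_simp
        linarith
    _ ≤ _ := mul_le_mul_of_nonneg_left (exp_neg_one_le_one_sub_inv_pow d) hx₀.le

/-- Lovász Local Lemma, symmetric case: if each event `A i` is mutually independent of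
all but at most `d` of the other events, `P(A i) ≤ p` for all `i`, and `e·p·(d+1) ≤ 1`,
then with positive probability none of the events occurs. -/
theorem lovasz_local_lemma {Ω : Type*} [MeasurableSpace Ω] (μ : Measure Ω)
    [IsProbabilityMeasure μ] {n : ℕ} (A : Fin n → Set Ω)
    (hA : ∀ i, MeasurableSet (A i)) (d : ℕ) (p : ℝ)
    (Γ : Fin n → Finset (Fin n))
    (hΓ : ∀ i, (Γ i).card ≤ d)
    -- `A i` is mutually independent of all events `A j` with `j ≠ i`, `j ∉ Γ i`:
    -- it is independent of every Boolean combination of them.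
    (hindep : ∀ i, ∀ T : Finset (Fin n), (∀ j ∈ T, j ≠ i ∧ j ∉ Γ i) →
      ∀ g : Fin n → Bool,
        μ (A i ∩ ⋂ j ∈ T, (if g j then A j else (A j)ᶜ)) =
          μ (A i) * μ (⋂ j ∈ T, (if g j then A j else (A j)ᶜ)))
    (hp : ∀ i, (μ (A i)).toReal ≤ p)
    (hcond : Real.exp 1 * p * (d + 1) ≤ 1) :
    0 < μ (⋂ i, (A i)ᶜ) := by
  obtain ⟨x, hx₀, hx₁, hpx⟩ := exists_le_mul_one_sub_pow hcond
  have hindep_compl : ∀ i, ∀ T : Finset (Fin n), (∀ j ∈ T, j ≠ i ∧ j ∉ Γ i) →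
      μ.real (A i ∩ ⋂ j ∈ T, (A j)ᶜ) = μ.real (A i) * μ.real (⋂ j ∈ T, (A j)ᶜ) := fun i T hT => by
    simpa [Measure.real] using congrArg ENNReal.toReal (hindep i T hT fun _ => false)
  have hcond_prob : ∀ (S : Finset (Fin n)) i, i ∉ S →
      μ.real (A i ∩ ⋂ j ∈ S, (A j)ᶜ) ≤ x * μ.real (⋂ j ∈ S, (A j)ᶜ) := fun S i hi =>
    measureReal_inter_biInter_compl_le hA hx₀ hx₁.le hΓ hindep_compl (fun i => (hp i).trans hpx)
      S hi
  have hbound : (1 - x) ^ n ≤ μ.real (⋂ i, (A i)ᶜ) := by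
    simpa using one_sub_pow_card_mul_le_measureReal_biInter_compl hA hx₁.le ∅
      (U := Finset.univ) fun a _ V _ ha => hcond_prob (V ∪ ∅) a (by simpa using ha)
  exact (ENNReal.toReal_pos_iff.1 ((pow_pos (by linarith) n).trans_le hbound)).1
end

section
/- For every set S of k distinct integers in {1,…,2^n} (with n large enough) there exists a prime q ≤ k² n such that the map x ↦ x mod q is injective on S. -/
/-!
If `x` is injective then the Vandermonde determinant `t = ∏_{i<j} (xⱼ - xᵢ)` is nonzero, and a prime
`q` with `q ∤ t` separates all the `xᵢ` modulo `q`. Since `|t| ≤ 2^(n·C(k,2)) ≤ 2^(N/2)` with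
`N = k²n`, while Chebyshev's bound `ϑ(N) ≥ N log 2 - O(√N log N)` gives `2^(N/2) < N#` for large
`N`, not every prime `q ≤ N` can divide `t`.
-/

open Finset Matrix Real Filter

theorem Matrix.injective_mod_of_not_dvd_det_vandermonde {k q : ℕ} (hq : q.Prime) {x : Fin k → ℕ}
    (hx : ¬ (q : ℤ) ∣ (vandermonde fun i => (x i : ℤ)).det) :
    Function.Injective fun i => x i % q := by
  have := Fact.mk hq
  have hcast : ((vandermonde fun i => (x i : ℤ)).det : ZMod q) =
      (vandermonde fun i => (x i : ZMod q)).det := by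
    simp [det_vandermonde]
  rw [← ZMod.intCast_zmod_eq_zero_iff_dvd, hcast, ← Ne, det_vandermonde_ne_zero_iff] at hx
  exact fun i j hij => hx ((ZMod.natCast_eq_natCast_iff' _ _ _).2 hij)

theorem Fin.sum_card_Ioi (k : ℕ) : ∑ i : Fin k, #(Ioi i) = k.choose 2 := by
  simp_rw [Fin.card_Ioi]
  rw [Fin.sum_univ_eq_sum_range (fun i => k - 1 - i), sum_range_reflect (fun i => i), sum_range_id,
    Nat.choose_two_right]

theorem Matrix.abs_det_vandermonde_le {k : ℕ} {v : Fin k → ℤ} {B : ℤ}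
    (hv : ∀ i j, |v j - v i| ≤ B) : |(vandermonde v).det| ≤ B ^ k.choose 2 := by
  rw [det_vandermonde, abs_prod, ← Fin.sum_card_Ioi, ← prod_pow_eq_pow_sum]
  gcongr with i
  calc |∏ j ∈ Ioi i, (v j - v i)| = ∏ j ∈ Ioi i, |v j - v i| := abs_prod _ _
    _ ≤ ∏ j ∈ Ioi i, B := prod_le_prod (fun _ _ => abs_nonneg _) fun j _ => hv i j
    _ = B ^ #(Ioi i) := prod_const B

theorem Nat.exists_prime_le_not_dvd_of_abs_lt_primorial {N : ℕ} {t : ℤ} (ht : t ≠ 0)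
    (htN : |t| < primorial N) : ∃ p, p.Prime ∧ p ≤ N ∧ ¬ (p : ℤ) ∣ t := by
  by_contra! h
  have hdvd : primorial N ∣ t.natAbs :=
    Finset.prod_primes_dvd _ (fun p hp => (prime_of_mem_primesLE hp).prime)
      fun p hp => Int.natCast_dvd.1 (h p (prime_of_mem_primesLE hp) (le_of_mem_primesLE hp))
  have := Nat.le_of_dvd (Int.natAbs_pos.2 ht) hdvd
  rw [Int.abs_eq_natAbs] at htN
  omega

theorem Real.isLittleO_sqrt_mul_log_id : (fun x => √x * log x) =o[atTop] id := by
  have h := (Asymptotics.isBigO_refl sqrt atTop).mul_isLittleO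
    (isLittleO_log_rpow_atTop (r := 1 / 2) (by norm_num))
  refine h.congr' EventuallyEq.rfl ?_
  filter_upwards [eventually_ge_atTop 0] with x hx
  rw [← sqrt_eq_rpow, mul_self_sqrt hx, id]

theorem Nat.eventually_two_pow_half_lt_primorial :
    ∀ᶠ N : ℕ in atTop, 2 ^ (N / 2) < primorial N := by
  -- the error terms of `Chebyshev.theta_ge` total at most `4√N log N ≤ N log 2 / 4`
  have hbound := isLittleO_sqrt_mul_log_id.bound (c := Real.log 2 / 16) (by positivity)
  filter_upwards [tendsto_natCast_atTop_atTop.eventually hbound, eventually_ge_atTop 2]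
    with N hN hN2
  have hN2' : (2 : ℝ) ≤ N := by exact_mod_cast hN2
  rw [Real.norm_of_nonneg (by positivity), id, Real.norm_of_nonneg (by positivity)] at hN
  have hlog_le : Real.log N ≤ √N * Real.log N :=
    le_mul_of_one_le_left (Real.log_nonneg (by linarith)) (Real.one_le_sqrt.2 (by linarith))
  have hlog_succ : Real.log (N + 1) ≤ 2 * Real.log N := by
    rw [← Nat.cast_ofNat, ← Real.log_pow]
    exact Real.log_le_log (by positivity) (by nlinarith)
  have htheta := Chebyshev.theta_ge N
  rw [Chebyshev.theta_eq_log_primorial, Nat.floor_natCast] at htheta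
  have hhalf : ((N / 2 : ℕ) : ℝ) ≤ N / 2 := Nat.cast_div_le
  have hlog2 : 0 < Real.log 2 := Real.log_pos one_lt_two
  rw [← Nat.cast_lt (α := ℝ), ← Real.log_lt_log_iff (by positivity)
    (by exact_mod_cast primorial_pos N), Nat.cast_pow, Nat.cast_ofNat, Real.log_pow]
  nlinarith

/-- For every set of `k` distinct integers in `{1,…,2^n}` (with `n` large enough) there is a
prime `q ≤ k² n` such that `x ↦ x mod q` is injective on the set. -/
theorem exists_small_prime_hash (k : ℕ) (hk : 1 ≤ k) :
    ∃ n₀ : ℕ, ∀ n ≥ n₀, ∀ x : Fin k → ℕ, Function.Injective x →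
      (∀ i, 1 ≤ x i ∧ x i ≤ 2 ^ n) →
      ∃ q : ℕ, q.Prime ∧ q ≤ k ^ 2 * n ∧ Function.Injective fun i => x i % q := by
  obtain ⟨N₀, hN₀⟩ := eventually_atTop.1 Nat.eventually_two_pow_half_lt_primorial
  refine ⟨N₀, fun n hn x hx hbound => ?_⟩
  set t := (vandermonde fun i => (x i : ℤ)).det
  have ht : t ≠ 0 := det_vandermonde_ne_zero_iff.2 (Nat.cast_injective.comp hx)
  have hx_le : ∀ i, (x i : ℤ) ≤ 2 ^ n := fun i => by exact_mod_cast (hbound i).2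
  have hdiff : ∀ i j, |(x j : ℤ) - x i| ≤ 2 ^ n := fun i j =>
    abs_sub_le_iff.2 ⟨by linarith [hx_le j, (x i).cast_nonneg (α := ℤ)],
      by linarith [hx_le i, (x j).cast_nonneg (α := ℤ)]⟩
  have hchoose : k.choose 2 * 2 ≤ k ^ 2 := by
    rw [Nat.choose_two_right, sq]
    exact (Nat.div_mul_le_self _ 2).trans (Nat.mul_le_mul_left k (Nat.sub_le k 1))
  have hpairs : n * k.choose 2 ≤ k ^ 2 * n / 2 := by
    rw [Nat.le_div_iff_mul_le two_pos, mul_assoc, mul_comm (k ^ 2)]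
    exact Nat.mul_le_mul_left n hchoose
  have htN : |t| < primorial (k ^ 2 * n) := calc
    |t| ≤ (2 ^ n) ^ k.choose 2 := abs_det_vandermonde_le hdiff
    _ ≤ 2 ^ (k ^ 2 * n / 2) := by
      rw [← pow_mul]; exact_mod_cast Nat.pow_le_pow_right two_pos hpairs
    _ < primorial (k ^ 2 * n) := by
      exact_mod_cast hN₀ _ (hn.trans (Nat.le_mul_of_pos_left n (pow_pos hk 2)))
  obtain ⟨q, hq, hqN, hqt⟩ := Nat.exists_prime_le_not_dvd_of_abs_lt_primorial ht htN
  exact ⟨q, hq, hqN, injective_mod_of_not_dvd_det_vandermonde hq hqt⟩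
end

section
/- Suppose X, Y ∈ {0,1}^n differ in at most αn positions with α ≤ 1/2, and π is drawn from a pairwise independent family of permutations of the positions. Partition the permuted strings into m = n/k consecutive blocks of length k. Call a block dangerous if the permuted strings differ in at least (α+δ)k positions within it. Then for sufficiently large n, Pr[a fixed block is dangerous] ≤ 1/(2δ²k), and the probability that the number of dangerous blocks is at least s/2 is at most n/(s·k²·δ²). -/
/-!
Let `r ≤ α n` be the Hamming distance of `X` and `Y`. The number `Φ` of positions of a fixed block
of size `k` that a pairwise independent permutation sends to mismatches has the first two moments
of a hypergeometric variable: `E Φ = k r / n ≤ α k` and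
`Var Φ = k r (n - r) (n - k) / (n² (n - 1)) ≤ k / 4`.
Chebyshev's inequality bounds the probability that a block is dangerous by `1 / (4 δ² k)`, and
Markov's inequality for the number of dangerous blocks, whose expectation is at most
`(n / k) / (4 δ² k)`, gives the second bound.
-/

open Finset

theorem card_filter_le_mul_le_sum {α : Type*} (s : Finset α) (f : α → ℝ)
    (hf : ∀ a ∈ s, 0 ≤ f a) (t : ℝ) : #{a ∈ s | t ≤ f a} * t ≤ ∑ a ∈ s, f a :=
  calc #{a ∈ s | t ≤ f a} * t = #{a ∈ s | t ≤ f a} • t := (nsmul_eq_mul _ _).symm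
    _ ≤ ∑ a ∈ s with t ≤ f a, f a := card_nsmul_le_sum _ _ _ fun _ ha => (mem_filter.1 ha).2
    _ ≤ ∑ a ∈ s, f a :=
      sum_le_sum_of_subset_of_nonneg (filter_subset _ _) fun a ha _ => hf a ha

theorem card_filter_add_le_mul_sq_le_sum_sq_sub {α : Type*} (s : Finset α) (f : α → ℝ)
    (μ : ℝ) {t : ℝ} (ht : 0 ≤ t) :
    #{a ∈ s | μ + t ≤ f a} * t ^ 2 ≤ ∑ a ∈ s, (f a - μ) ^ 2 := by
  have hsub : {a ∈ s | μ + t ≤ f a} ⊆ {a ∈ s | t ^ 2 ≤ (f a - μ) ^ 2} :=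
    fun a ha => by
      simp only [mem_filter] at ha ⊢
      exact ⟨ha.1, pow_le_pow_left₀ ht (by linarith [ha.2]) 2⟩
  calc (#{a ∈ s | μ + t ≤ f a} : ℝ) * t ^ 2 ≤ #{a ∈ s | t ^ 2 ≤ (f a - μ) ^ 2} * t ^ 2 := by
        gcongr
    _ ≤ ∑ a ∈ s, (f a - μ) ^ 2 :=
        card_filter_le_mul_le_sum s _ (fun _ _ => sq_nonneg _) _

theorem card_le_card_filter_mul_le_card_mul {ι β : Type*} [Fintype ι] (S : Finset β)
    (P : β → ι → Prop) [∀ b σ, Decidable (P b σ)] {c : ℝ} (hc : ∀ b ∈ S, (#{σ | P b σ} : ℝ) ≤ c)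
    (t : ℝ) : #{σ | t ≤ (#{b ∈ S | P b σ} : ℝ)} * t ≤ #S * c := by
  have hswap : ∑ σ, #{b ∈ S | P b σ} = ∑ b ∈ S, #{σ | P b σ} := by
    simp only [card_filter]
    exact sum_comm
  calc _ ≤ ∑ σ, (#{b ∈ S | P b σ} : ℝ) :=
        card_filter_le_mul_le_sum univ _ (fun _ _ => Nat.cast_nonneg _) t
    _ = ∑ b ∈ S, (#{σ | P b σ} : ℝ) := by exact_mod_cast hswap
    _ ≤ #S * c := by simpa using sum_le_card_nsmul S _ c hc

theorem hypergeometric_variance_le {n b r : ℕ} (hn : 2 ≤ n) (hb : b ≤ n) (hr : r ≤ n) :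
    (b * r / n + b * (b - 1) * (r * (r - 1)) / (n * (n - 1)) - (b * r / n) ^ 2 : ℝ) ≤ b / 4 := by
  have hn' : (2 : ℝ) ≤ n := by exact_mod_cast hn
  have hb' : (b : ℝ) ≤ n := by exact_mod_cast hb
  have hr' : (r : ℝ) ≤ n := by exact_mod_cast hr
  have hn1 : (0 : ℝ) < n - 1 := by linarith
  have hvar : (b * r / n + b * (b - 1) * (r * (r - 1)) / (n * (n - 1)) - (b * r / n) ^ 2 : ℝ)
      = b * (r * (n - r)) * (n - b) / (n ^ 2 * (n - 1)) := by
    field_simp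
    ring
  rw [hvar, div_le_div_iff₀ (by positivity) (by norm_num)]
  rcases Nat.eq_zero_or_pos b with rfl | hb0
  · simp
  have hb1 : (1 : ℝ) ≤ b := by exact_mod_cast hb0
  have hrr : 4 * (r * (n - r)) ≤ (n : ℝ) ^ 2 := by nlinarith [sq_nonneg ((n : ℝ) - 2 * r)]
  have : 4 * (r * (n - r)) * (n - b) ≤ (n : ℝ) ^ 2 * (n - 1) :=
    calc 4 * (r * (n - r)) * (n - b) ≤ (n : ℝ) ^ 2 * (n - b) := by gcongr
      _ ≤ (n : ℝ) ^ 2 * (n - 1) := by gcongr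
  linarith [mul_le_mul_of_nonneg_left this (Nat.cast_nonneg b : (0 : ℝ) ≤ b)]

theorem cast_card_offDiag {α R : Type*} [Ring R] (s : Finset α) :
    (#s.offDiag : R) = #s * (#s - 1) := by
  rw [offDiag_card, Nat.cast_sub (Nat.le_mul_self _), Nat.cast_mul, mul_sub_one]

def IsOneWiseIndependent {ι : Type*} [Fintype ι] {n : ℕ} (F : ι → Equiv.Perm (Fin n)) : Prop :=
  ∀ i x : Fin n, (#{σ | F σ i = x} : ℝ) / Fintype.card ι = 1 / n

def IsPairwiseIndependent {ι : Type*} [Fintype ι] {n : ℕ} (F : ι → Equiv.Perm (Fin n)) : Prop :=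
  ∀ i j x y : Fin n, i ≠ j → x ≠ y →
    (#{σ | F σ i = x ∧ F σ j = y} : ℝ) / Fintype.card ι = 1 / (n * (n - 1))

def hitCount {ι : Type*} {n : ℕ} (F : ι → Equiv.Perm (Fin n)) (B D : Finset (Fin n)) (σ : ι) :
    ℕ :=
  #{j ∈ B | F σ j ∈ D}

def block (n k l : ℕ) : Finset (Fin n) :=
  {j | l * k ≤ j ∧ j < (l + 1) * k}

theorem card_block {n k l : ℕ} (h : (l + 1) * k ≤ n) : #(block n k l) = k := by
  have hmap : (block n k l).map Fin.valEmbedding = Ico (l * k) ((l + 1) * k) := by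
    ext j
    simp only [block, mem_map, mem_filter, mem_univ, true_and, Fin.valEmbedding_apply, mem_Ico]
    exact ⟨fun ⟨x, hx, hxj⟩ => hxj ▸ hx, fun hj => ⟨⟨j, by omega⟩, hj, rfl⟩⟩
  rw [← card_map, hmap, Nat.card_Ico]
  ring_nf
  omega

theorem hitCount_block {ι : Type*} {n : ℕ} (F : ι → Equiv.Perm (Fin n)) (X Y : Fin n → Bool)
    (k l : ℕ) (σ : ι) :
    hitCount F (block n k l) {x | X x ≠ Y x} σ =
      #{j : Fin n | l * k ≤ j ∧ j < (l + 1) * k ∧ X (F σ j) ≠ Y (F σ j)} := by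
  simp only [hitCount, block, filter_filter, mem_filter, mem_univ, true_and, and_assoc]

section PairwiseIndependent

variable {ι : Type*} [Fintype ι] [Nonempty ι] {n : ℕ} {F : ι → Equiv.Perm (Fin n)}

theorem card_filter_apply_mem (h1 : IsOneWiseIndependent F) (i : Fin n) (D : Finset (Fin n)) :
    (#{σ | F σ i ∈ D} : ℝ) = #D * (Fintype.card ι / n) := by
  rw [card_eq_sum_card_fiberwise (s := {σ | F σ i ∈ D}) (f := fun σ => F σ i) (t := D)
    fun σ hσ => (mem_filter.1 hσ).2, Nat.cast_sum, ← nsmul_eq_mul, ← sum_const]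
  refine sum_congr rfl fun x hx => ?_
  have hfiber : ({σ | F σ i ∈ D} : Finset ι).filter (fun σ => F σ i = x) =
      ({σ | F σ i = x} : Finset ι) := by
    ext σ
    simp only [mem_filter, mem_univ, true_and]
    exact ⟨And.right, fun h => ⟨h ▸ hx, h⟩⟩
  have hι : (0 : ℝ) < Fintype.card ι := by exact_mod_cast Fintype.card_pos
  rw [hfiber, ← div_mul_cancel₀ (#{σ | F σ i = x} : ℝ) hι.ne', h1]
  ring

theorem card_filter_apply_mem_and_apply_mem (h2 : IsPairwiseIndependent F) {i j : Fin n}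
    (hij : i ≠ j) (D : Finset (Fin n)) :
    (#{σ | F σ i ∈ D ∧ F σ j ∈ D} : ℝ) =
      #D * (#D - 1) * (Fintype.card ι / (n * (n - 1))) := by
  have hmaps : ((({σ | F σ i ∈ D ∧ F σ j ∈ D} : Finset ι)) : Set ι).MapsTo
      (fun σ => (F σ i, F σ j)) D.offDiag := fun σ hσ => by
    simp only [coe_filter, Set.mem_ofPred_eq, mem_univ, true_and] at hσ
    exact mem_offDiag.2 ⟨hσ.1, hσ.2, (F σ).injective.ne hij⟩
  rw [card_eq_sum_card_fiberwise hmaps, Nat.cast_sum, ← cast_card_offDiag, ← nsmul_eq_mul,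
    ← sum_const]
  refine sum_congr rfl fun p hp => ?_
  obtain ⟨hp1, hp2, hp⟩ := mem_offDiag.1 hp
  have hfiber : ({σ | F σ i ∈ D ∧ F σ j ∈ D} : Finset ι).filter (fun σ => (F σ i, F σ j) = p) =
      ({σ | F σ i = p.1 ∧ F σ j = p.2} : Finset ι) := by
    ext σ
    simp only [mem_filter, mem_univ, true_and, Prod.ext_iff]
    exact ⟨And.right, fun h => ⟨⟨h.1 ▸ hp1, h.2 ▸ hp2⟩, h⟩⟩
  have hι : (0 : ℝ) < Fintype.card ι := by exact_mod_cast Fintype.card_pos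
  rw [hfiber, ← div_mul_cancel₀ (#{σ | F σ i = p.1 ∧ F σ j = p.2} : ℝ) hι.ne', h2 i j _ _ hij hp]
  ring

theorem sum_hitCount (h1 : IsOneWiseIndependent F) (B D : Finset (Fin n)) :
    ∑ σ, (hitCount F B D σ : ℝ) = #B * (#D * (Fintype.card ι / n)) := by
  have hswap : ∑ σ, hitCount F B D σ = ∑ j ∈ B, #{σ | F σ j ∈ D} := by
    simp only [hitCount, card_filter]
    exact sum_comm
  rw [← Nat.cast_sum, hswap, Nat.cast_sum, sum_congr rfl fun j _ => card_filter_apply_mem h1 j D,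
    sum_const, nsmul_eq_mul]

theorem sum_hitCount_sq (h1 : IsOneWiseIndependent F) (h2 : IsPairwiseIndependent F)
    (B D : Finset (Fin n)) :
    ∑ σ, (hitCount F B D σ : ℝ) ^ 2 = #B * (#D * (Fintype.card ι / n)) +
      #B * (#B - 1) * (#D * (#D - 1) * (Fintype.card ι / (n * (n - 1)))) := by
  -- `Φ ^ 2 = Φ + Φ (Φ - 1)`, and `Φ (Φ - 1)` counts ordered pairs of distinct hits, whose
  -- expected number pairwise independence determines
  have hsq : ∀ σ, (hitCount F B D σ : ℝ) ^ 2 =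
      hitCount F B D σ + #{p ∈ B.offDiag | F σ p.1 ∈ D ∧ F σ p.2 ∈ D} := by
    intro σ
    have hpairs : {p ∈ B.offDiag | F σ p.1 ∈ D ∧ F σ p.2 ∈ D} = {j ∈ B | F σ j ∈ D}.offDiag := by
      ext p
      simp only [mem_filter, mem_offDiag]
      constructor
      · rintro ⟨⟨hB1, hB2, hne⟩, hD1, hD2⟩
        exact ⟨⟨hB1, hD1⟩, ⟨hB2, hD2⟩, hne⟩
      · rintro ⟨⟨hB1, hD1⟩, ⟨hB2, hD2⟩, hne⟩
        exact ⟨⟨hB1, hB2, hne⟩, hD1, hD2⟩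
    rw [hpairs, cast_card_offDiag, hitCount]
    ring
  have hswap : ∑ σ, #{p ∈ B.offDiag | F σ p.1 ∈ D ∧ F σ p.2 ∈ D} =
      ∑ p ∈ B.offDiag, #{σ | F σ p.1 ∈ D ∧ F σ p.2 ∈ D} := by
    simp only [card_filter]
    exact sum_comm
  rw [sum_congr rfl fun σ _ => hsq σ, sum_add_distrib, sum_hitCount h1, ← Nat.cast_sum, hswap,
    Nat.cast_sum, sum_congr rfl fun p hp =>
      card_filter_apply_mem_and_apply_mem h2 (mem_offDiag.1 hp).2.2 D,
    sum_const, nsmul_eq_mul, cast_card_offDiag]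

theorem sum_hitCount_sub_sq_le (h1 : IsOneWiseIndependent F) (h2 : IsPairwiseIndependent F)
    (hn : 2 ≤ n) (B D : Finset (Fin n)) :
    ∑ σ, ((hitCount F B D σ : ℝ) - #B * #D / n) ^ 2 ≤ Fintype.card ι * (#B / 4) := by
  set μ : ℝ := #B * #D / n
  have hexpand : ∑ σ, ((hitCount F B D σ : ℝ) - μ) ^ 2 =
      ∑ σ, (hitCount F B D σ : ℝ) ^ 2 - 2 * μ * ∑ σ, (hitCount F B D σ : ℝ) +
        Fintype.card ι * μ ^ 2 := by
    simp only [sub_sq, sum_add_distrib, sum_sub_distrib, sum_const, card_univ, nsmul_eq_mul,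
      mul_assoc, ← mul_sum, ← sum_mul]
    ring
  have hB : #B ≤ n := by simpa using card_le_univ B
  have hD : #D ≤ n := by simpa using card_le_univ D
  rw [hexpand, sum_hitCount_sq h1 h2, sum_hitCount h1]
  calc _ = (Fintype.card ι : ℝ) * (#B * #D / n + #B * (#B - 1) * (#D * (#D - 1)) / (n * (n - 1)) -
        (#B * #D / n) ^ 2) := by simp only [μ]; ring
    _ ≤ _ := mul_le_mul_of_nonneg_left (hypergeometric_variance_le hn hB hD) (by positivity)

theorem card_le_hitCount_mul_sq_le (h1 : IsOneWiseIndependent F) (h2 : IsPairwiseIndependent F)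
    (hn : 2 ≤ n) (B D : Finset (Fin n)) {t : ℝ} (ht : 0 ≤ t) :
    #{σ | #B * #D / n + t ≤ (hitCount F B D σ : ℝ)} * t ^ 2 ≤ Fintype.card ι * (#B / 4) :=
  (card_filter_add_le_mul_sq_le_sum_sq_sub univ _ _ ht).trans (sum_hitCount_sub_sq_le h1 h2 hn B D)

theorem card_dangerous_mul_le (h1 : IsOneWiseIndependent F) (h2 : IsPairwiseIndependent F)
    (hn : 2 ≤ n) {k l : ℕ} (hk : 0 < k) (hl : (l + 1) * k ≤ n) {X Y : Fin n → Bool} {α δ : ℝ}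
    (hXY : (hammingDist X Y : ℝ) ≤ α * n) (hδ : 0 ≤ δ) :
    (#{σ | (α + δ) * k ≤
        (#{j : Fin n | l * k ≤ j ∧ j < (l + 1) * k ∧ X (F σ j) ≠ Y (F σ j)} : ℝ)} : ℝ) *
      (4 * δ ^ 2 * k) ≤ Fintype.card ι := by
  set D : Finset (Fin n) := {x | X x ≠ Y x} with hD
  have hk' : (0 : ℝ) < k := by exact_mod_cast hk
  have hmean : (k : ℝ) * #D / n ≤ α * k := by
    rw [div_le_iff₀ (by positivity)]
    nlinarith [show (#D : ℝ) ≤ α * n from hXY]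
  have hsub : ({σ | (α + δ) * k ≤
      (#{j : Fin n | l * k ≤ j ∧ j < (l + 1) * k ∧ X (F σ j) ≠ Y (F σ j)} : ℝ)} : Finset ι) ⊆
      ({σ | k * #D / n + δ * k ≤ (hitCount F (block n k l) D σ : ℝ)} : Finset ι) := by
    intro σ
    simp only [mem_filter, mem_univ, true_and]
    rw [hD, hitCount_block]
    intro h
    linarith
  have hcheb := card_le_hitCount_mul_sq_le h1 h2 hn (block n k l) D (mul_nonneg hδ hk'.le)
  rw [card_block hl] at hcheb
  have hcard : (#_ : ℝ) ≤ #_ := Nat.cast_le.2 (card_le_card hsub)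
  refine le_of_mul_le_mul_right ?_ hk'
  calc _ = 4 * ((#_ : ℝ) * (δ * k) ^ 2) := by ring
    _ ≤ 4 * (Fintype.card ι * (k / 4)) := by
      linarith [(mul_le_mul_of_nonneg_right hcard (sq_nonneg (δ * k))).trans hcheb]
    _ = Fintype.card ι * k := by ring

end PairwiseIndependent

theorem dangerous_blocks_bound_general (α δ : ℝ) (hδ : 0 < δ)
    (k : ℕ) (hk : 0 < k) :
    ∃ n₀ : ℕ, ∀ n, n₀ ≤ n → k ∣ n →
      ∀ {ι : Type} [Fintype ι] [Nonempty ι] (F : ι → Equiv.Perm (Fin n)),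
      (∀ i x : Fin n,
        ((Finset.univ.filter fun σ => F σ i = x).card : ℝ) / Fintype.card ι = 1 / n) →
      (∀ i j x y : Fin n, i ≠ j → x ≠ y →
        ((Finset.univ.filter fun σ => F σ i = x ∧ F σ j = y).card : ℝ) / Fintype.card ι =
          1 / (n * (n - 1))) →
      ∀ X Y : Fin n → Bool, (hammingDist X Y : ℝ) ≤ α * n →
      (∀ l < n / k,
        ((Finset.univ.filter fun σ : ι =>
            (α + δ) * k ≤ ((Finset.univ.filter fun j : Fin n =>
              l * k ≤ (j : ℕ) ∧ (j : ℕ) < (l + 1) * k ∧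
                X (F σ j) ≠ Y (F σ j)).card : ℝ)).card : ℝ) / Fintype.card ι ≤
          1 / (2 * δ ^ 2 * k)) ∧
      (∀ s : ℕ, 0 < s →
        ((Finset.univ.filter fun σ : ι =>
            (s : ℝ) / 2 ≤ (((Finset.range (n / k)).filter fun l =>
              (α + δ) * k ≤ ((Finset.univ.filter fun j : Fin n =>
                l * k ≤ (j : ℕ) ∧ (j : ℕ) < (l + 1) * k ∧
                  X (F σ j) ≠ Y (F σ j)).card : ℝ)).card : ℝ)).card : ℝ) /
          Fintype.card ι ≤ n / (s * k ^ 2 * δ ^ 2)) := by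
  refine ⟨2, fun n hn _ ι _ _ F h1 h2 X Y hXY => ?_⟩
  have hι : (0 : ℝ) < Fintype.card ι := by exact_mod_cast Fintype.card_pos
  have hk' : (0 : ℝ) < k := by exact_mod_cast hk
  have hdanger := fun l (hl : l < n / k) => card_dangerous_mul_le h1 h2 hn hk
    ((Nat.mul_le_mul_right k hl).trans (Nat.div_mul_le_self n k)) hXY hδ.le
  refine ⟨fun l hl => ?_, fun s hs => ?_⟩
  · rw [div_le_div_iff₀ hι (by positivity), one_mul]
    refine le_trans ?_ (hdanger l hl)
    gcongr
    norm_num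
  · have hmarkov := card_le_card_filter_mul_le_card_mul (range (n / k)) _
      (c := Fintype.card ι / (4 * δ ^ 2 * k))
      (fun l hl => (le_div_iff₀ (by positivity)).2 (hdanger l (mem_range.1 hl))) ((s : ℝ) / 2)
    have hblocks : ((n / k : ℕ) : ℝ) * k ≤ n := by exact_mod_cast Nat.div_mul_le_self n k
    rw [card_range] at hmarkov
    rw [div_le_div_iff₀ hι (by positivity)]
    calc _ = (#_ : ℝ) * (s / 2) * (2 * k ^ 2 * δ ^ 2) := by ring
      _ ≤ (n / k : ℕ) * (Fintype.card ι / (4 * δ ^ 2 * k)) * (2 * k ^ 2 * δ ^ 2) := by gcongr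
      _ = (n / k : ℕ) * k * Fintype.card ι / 2 := by field_simp; ring
      _ ≤ n * Fintype.card ι := by nlinarith

/-- If `X, Y ∈ {0,1}^n` differ in at most `αn` positions (`α ≤ 1/2`) and `π` is drawn from a
pairwise independent family of permutations of the positions, partition the permuted strings
into `m = n/k` blocks of length `k`; a block is dangerous if the permuted strings differ in at
least `(α+δ)k` of its positions. Then for sufficiently large `n`, the probability that a
fixed block is dangerous is at most `1/(2δ²k)`, and the probability that there are at least
`s/2` dangerous blocks is at most `n/(s k² δ²)`. -/
theorem dangerous_blocks_bound (α δ : ℝ) (hα0 : 0 ≤ α) (hα : α ≤ 1/2) (hδ : 0 < δ)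
    (k : ℕ) (hk : 0 < k) :
    ∃ n₀ : ℕ, ∀ n, n₀ ≤ n → k ∣ n →
      ∀ {ι : Type} [Fintype ι] [Nonempty ι] (F : ι → Equiv.Perm (Fin n)),
      (∀ i x : Fin n,
        ((Finset.univ.filter fun σ => F σ i = x).card : ℝ) / Fintype.card ι = 1 / n) →
      (∀ i j x y : Fin n, i ≠ j → x ≠ y →
        ((Finset.univ.filter fun σ => F σ i = x ∧ F σ j = y).card : ℝ) / Fintype.card ι =
          1 / (n * (n - 1))) →
      ∀ X Y : Fin n → Bool, (hammingDist X Y : ℝ) ≤ α * n →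
      (∀ l < n / k,
        ((Finset.univ.filter fun σ : ι =>
            (α + δ) * k ≤ ((Finset.univ.filter fun j : Fin n =>
              l * k ≤ (j : ℕ) ∧ (j : ℕ) < (l + 1) * k ∧
                X (F σ j) ≠ Y (F σ j)).card : ℝ)).card : ℝ) / Fintype.card ι ≤
          1 / (2 * δ ^ 2 * k)) ∧
      (∀ s : ℕ, 0 < s →
        ((Finset.univ.filter fun σ : ι =>
            (s : ℝ) / 2 ≤ (((Finset.range (n / k)).filter fun l =>
              (α + δ) * k ≤ ((Finset.univ.filter fun j : Fin n =>
                l * k ≤ (j : ℕ) ∧ (j : ℕ) < (l + 1) * k ∧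
                  X (F σ j) ≠ Y (F σ j)).card : ℝ)).card : ℝ)).card : ℝ) /
          Fintype.card ι ≤ n / (s * k ^ 2 * δ ^ 2)) :=
  dangerous_blocks_bound_general α δ hδ k hk
end
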